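/- arXiv:math/0412170 — 2 statements merged into one kernel-verified Lean document; each statement's English description precedes it below -/
import Mathlib

section
/- Let x = X_1 be the generating operator of the complex group algebra of the free group F_N on N ≥ 1 generators. For every n ≥ 1, x^n · X_n = Σ_{i=0}^{n−1} binom(n,i)·(2N−1)^i · X_{2n−2i} + 2N·(2N−1)^{n−1} · 1, where 1 is the identity of the algebra. -/
/-- `Xop N n` is the operator `X_n`: the sum, in the complex group algebra
`ℂ[F_N] = MonoidAlgebra ℂ (FreeGroup (Fin N))`, of the basis elements of all
words `w` whose reduced word has length `n`. Note `Xop N 0 = 1`. -/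
noncomputable def Xop (N n : ℕ) : MonoidAlgebra ℂ (FreeGroup (Fin N)) :=
  ∑ᶠ w ∈ {w : FreeGroup (Fin N) | (FreeGroup.toWord w).length = n},
    MonoidAlgebra.of ℂ (FreeGroup (Fin N)) w

/-- The canonical trace `τ` on `ℂ[F_N]`: the coefficient at the identity. -/
noncomputable def tr {N : ℕ} (a : MonoidAlgebra ℂ (FreeGroup (Fin N))) : ℂ := a.coeff 1


/-!
Left multiplication by one of the `2N` letters shortens a reduced word `g ≠ 1` for exactly one
letter (the inverse of its first letter) and lengthens it for the other `2N - 1`, while every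
letter lengthens `g = 1`. Comparing coefficients gives `x * X_m = X_(m+1) + (2N - 1) • X_(m-1)`
for `m ≥ 2` and `x * X_1 = X_2 + 2N • 1`. Away from the identity, `x` thus acts on the `X_m` like
`S + (2N - 1) S⁻¹` for the shift `S`, so `x ^ n * X_m` expands binomially as long as `m > n`.
Starting from `X_n`, only the path that steps down `n` times reaches the identity, at its last
step; its weight `(2N - 1) ^ (n - 1) * 2N` is the constant term.
-/

open Finset

section Recurrence

variable {M : Type*} [AddCommMonoid M]

theorem Finset.sum_range_choose_succ_nsmul (f : ℕ → M) (r k : ℕ) :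
    ∑ i ∈ range (r + 1), (k + 1).choose i • f i =
      ∑ i ∈ range (r + 1), k.choose i • f i + ∑ i ∈ range r, k.choose i • f (i + 1) := by
  rw [sum_range_succ', sum_range_succ' (fun i => k.choose i • f i)]
  simp only [Nat.choose_succ_succ, add_smul, sum_add_distrib, Nat.choose_zero_right]
  abel

variable {R : Type*} [Semiring R] {x : R} {F : ℕ → R} {q : ℕ}

theorem pow_mul_of_recurrence (hF : ∀ k, 2 ≤ k → x * F k = F (k + 1) + q • F (k - 1))
    (n m : ℕ) (hm : 1 ≤ m) :
    x ^ n * F (m + n) = ∑ i ∈ range (n + 1), (n.choose i * q ^ i) • F (m + 2 * (n - i)) := by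
  induction n generalizing m with
  | zero => simp
  | succ n ih =>
    set g : ℕ → R := fun i => q ^ i • F (m + 2 * (n + 1 - i))
    have hstep : x * F (m + (n + 1)) = F (m + 2 + n) + q • F (m + n) := by
      rw [hF _ (by omega)]
      congr 2
      omega
    have hup : x ^ n * F (m + 2 + n) = ∑ i ∈ range (n + 2), n.choose i • g i := by
      rw [ih _ (by omega), sum_range_succ (fun i => n.choose i • g i), Nat.choose_succ_self,
        zero_smul, add_zero]
      refine sum_congr rfl fun i hi => ?_
      rw [mul_smul]
      congr 3
      have := mem_range.mp hi
      omega
    have hdown : q • (x ^ n * F (m + n)) = ∑ i ∈ range (n + 1), n.choose i • g (i + 1) := by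
      rw [ih m hm, smul_sum]
      refine sum_congr rfl fun i _ => ?_
      simp only [g, smul_smul, pow_succ', Nat.add_sub_add_right]
      ring_nf
    rw [pow_succ, mul_assoc, hstep, mul_add, mul_smul_comm, hup, hdown,
      ← Finset.sum_range_choose_succ_nsmul]
    simp only [g, mul_smul]

theorem pow_mul_self_of_recurrence (hF : ∀ k, 2 ≤ k → x * F k = F (k + 1) + q • F (k - 1))
    {c : ℕ} (hF₁ : x * F 1 = F 2 + c • F 0) (n : ℕ) :
    x ^ (n + 1) * F (n + 1) =
      ∑ i ∈ range (n + 1), ((n + 1).choose i * q ^ i) • F (2 + 2 * (n - i)) +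
        (c * q ^ n) • F 0 := by
  induction n with
  | zero => simpa using hF₁
  | succ n ih =>
    set g : ℕ → R := fun i => q ^ i • F (2 + 2 * (n + 1 - i))
    have hstep : x * F (n + 2) = F (2 + (n + 1)) + q • F (n + 1) := by
      rw [hF _ (by omega)]
      congr 2
      omega
    have hdown : q • (x ^ (n + 1) * F (n + 1)) =
        ∑ i ∈ range (n + 1), (n + 1).choose i • g (i + 1) + (c * q ^ (n + 1)) • F 0 := by
      rw [ih, smul_add, smul_sum, smul_smul]
      congr 1
      · refine sum_congr rfl fun i _ => ?_
        simp only [g, smul_smul, pow_succ', Nat.add_sub_add_right]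
        ring_nf
      · ring_nf
    rw [pow_succ, mul_assoc, hstep, mul_add, mul_smul_comm, hdown,
      pow_mul_of_recurrence hF (n + 1) 2 (by norm_num), ← add_assoc]
    congr 1
    simpa only [g, mul_smul] using (Finset.sum_range_choose_succ_nsmul g (n + 1) (n + 1)).symm

end Recurrence

theorem Fintype.sum_ite_eq_add_card_sub_one_nsmul {ι M : Type*} [Fintype ι] [DecidableEq ι]
    [AddCommMonoid M] (i : ι) (a b : M) :
    ∑ j, (if i = j then a else b) = a + (Fintype.card ι - 1) • b := by
  rw [Fintype.sum_eq_add_sum_compl i, if_pos rfl, Finset.sum_congr rfl fun j hj => if_neg ?_,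
    Finset.sum_const, Finset.card_compl, Finset.card_singleton]
  simpa [eq_comm] using hj

open MonoidAlgebra

namespace FreeGroup

variable {k : Type*} [Semiring k] {α : Type*} [DecidableEq α]

theorem toWord_mk_singleton (p : α × Bool) : (mk [p]).toWord = [p] := by
  rw [toWord_mk, reduce_singleton]

theorem mk_singleton_injective : Function.Injective fun p : α × Bool => mk [p] :=
  fun p p' h => by simpa [toWord_mk_singleton] using congrArg toWord h

theorem toWord_mk_singleton_mul (p : α × Bool) (g : FreeGroup α) :
    (mk [p] * g).toWord =
      if g.toWord.head? = some (p.1, !p.2) then g.toWord.tail else p :: g.toWord := by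
  rw [toWord_mul, toWord_mk_singleton, List.singleton_append, reduce.cons, reduce_toWord]
  cases g.toWord with
  | nil => simp
  | cons b t =>
    by_cases h : b = (p.1, !p.2)
    · subst h; simp
    · have : ¬(p.1 = b.1 ∧ p.2 = !b.2) := fun ⟨h₁, h₂⟩ => h (Prod.ext h₁.symm (by simp [h₂]))
      simp [this, h]

theorem norm_inv_mk_singleton_mul (p : α × Bool) (g : FreeGroup α) :
    norm ((mk [p])⁻¹ * g) = if g.toWord.head? = some p then norm g - 1 else norm g + 1 := by
  rw [inv_mk, invRev, List.map_singleton, List.reverse_singleton, norm,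
    toWord_mk_singleton_mul, Bool.not_not]
  split_ifs <;> simp [norm]

variable [Fintype α]

variable (α) in
noncomputable def sphere (n : ℕ) : Finset (FreeGroup α) :=
  ((List.finite_length_eq (α × Bool) n).preimage toWord_injective.injOn).toFinset

@[simp]
theorem mem_sphere {n : ℕ} {g : FreeGroup α} : g ∈ sphere α n ↔ norm g = n := by
  simp [sphere, norm]

theorem sphere_zero : sphere α 0 = {1} := by
  ext g; simp [norm_eq_zero]

theorem sphere_one : sphere α 1 = univ.image fun p => mk [p] := by
  ext g
  simp only [mem_sphere, norm, List.length_eq_one_iff, mem_image, mem_univ, true_and]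
  constructor
  · rintro ⟨p, hp⟩
    exact ⟨p, by rw [← hp, mk_toWord]⟩
  · rintro ⟨p, rfl⟩
    exact ⟨p, toWord_mk_singleton p⟩

variable (k α) in
noncomputable def sphereSum (n : ℕ) : MonoidAlgebra k (FreeGroup α) :=
  ∑ g ∈ sphere α n, single g 1

theorem coeff_sphereSum (n : ℕ) (g : FreeGroup α) :
    (sphereSum k α n).coeff g = if norm g = n then 1 else 0 := by
  simp [sphereSum, Finsupp.single_apply, eq_comm]

theorem sphereSum_zero : sphereSum k α 0 = 1 := by
  simp [sphereSum, sphere_zero, one_def]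

theorem sphereSum_one : sphereSum k α 1 = ∑ p : α × Bool, single (mk [p]) 1 := by
  rw [sphereSum, sphere_one, sum_image mk_singleton_injective.injOn]

theorem coeff_sphereSum_one_mul (y : MonoidAlgebra k (FreeGroup α)) (g : FreeGroup α) :
    (sphereSum k α 1 * y).coeff g = ∑ p : α × Bool, y.coeff ((mk [p])⁻¹ * g) := by
  simp [sphereSum_one, sum_mul]

theorem coeff_sphereSum_one_mul_sphereSum_one (m : ℕ) :
    (sphereSum k α 1 * sphereSum k α m).coeff 1 =
      if m = 1 then ((2 * Fintype.card α : ℕ) : k) else 0 := by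
  have hterm : ∀ p : α × Bool, (sphereSum k α m).coeff ((mk [p])⁻¹ * 1) =
      if m = 1 then 1 else 0 := by
    intro p
    rw [coeff_sphereSum, norm_inv_mk_singleton_mul, toWord_one, norm_one]
    simp [eq_comm]
  rw [coeff_sphereSum_one_mul, Fintype.sum_congr _ _ hterm, sum_const, card_univ,
    Fintype.card_prod, Fintype.card_bool]
  split_ifs <;> simp [mul_comm]

theorem coeff_sphereSum_one_mul_sphereSum_of_toWord_eq_cons {g : FreeGroup α} {b : α × Bool}
    {t : List (α × Bool)} (hg : g.toWord = b :: t) (m : ℕ) :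
    (sphereSum k α 1 * sphereSum k α m).coeff g =
      (if t.length = m then 1 else 0) +
        (2 * Fintype.card α - 1) • (if t.length + 2 = m then 1 else 0) := by
  have hterm : ∀ p : α × Bool, (sphereSum k α m).coeff ((mk [p])⁻¹ * g) =
      if b = p then (if t.length = m then 1 else 0) else (if t.length + 2 = m then 1 else 0) := by
    intro p
    rw [coeff_sphereSum, norm_inv_mk_singleton_mul, norm, hg]
    by_cases hb : b = p <;> simp [hb]
  rw [coeff_sphereSum_one_mul, Fintype.sum_congr _ _ hterm,
    Fintype.sum_ite_eq_add_card_sub_one_nsmul, Fintype.card_prod, Fintype.card_bool, mul_comm]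

theorem sphereSum_one_mul_sphereSum {m : ℕ} (hm : 2 ≤ m) :
    sphereSum k α 1 * sphereSum k α m =
      sphereSum k α (m + 1) + (2 * Fintype.card α - 1) • sphereSum k α (m - 1) := by
  ext g
  rw [coeff_add, Finsupp.add_apply, coeff_smul_apply, coeff_sphereSum, coeff_sphereSum]
  rcases hg : g.toWord with _ | ⟨b, t⟩
  · rw [toWord_eq_nil_iff.mp hg, coeff_sphereSum_one_mul_sphereSum_one, norm_one,
      if_neg (by omega), if_neg (by omega), if_neg (by omega), smul_zero, add_zero]
  · rw [coeff_sphereSum_one_mul_sphereSum_of_toWord_eq_cons hg, norm, hg, List.length_cons]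
    have hdown : t.length + 1 = m - 1 ↔ t.length + 2 = m := by omega
    simp only [Nat.add_right_cancel_iff, hdown]

theorem sphereSum_one_mul_self :
    sphereSum k α 1 * sphereSum k α 1 = sphereSum k α 2 + (2 * Fintype.card α) • 1 := by
  ext g
  rw [coeff_add, Finsupp.add_apply, coeff_smul_apply, coeff_sphereSum, one_def, coeff_single,
    Finsupp.single_apply]
  rcases hg : g.toWord with _ | ⟨b, t⟩
  · rw [toWord_eq_nil_iff.mp hg, coeff_sphereSum_one_mul_sphereSum_one, norm_one]
    simp
  · have hg₁ : 1 ≠ g := by rintro rfl; simp at hg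
    rw [coeff_sphereSum_one_mul_sphereSum_of_toWord_eq_cons hg, norm, hg, List.length_cons,
      if_neg hg₁, smul_zero, add_zero]
    simp

end FreeGroup

open FreeGroup

theorem Xop_eq_sphereSum (N n : ℕ) : Xop N n = sphereSum ℂ (Fin N) n := by
  rw [Xop, sphereSum, ← finsum_mem_coe_finset]
  congr!
  ext g
  simp [FreeGroup.norm]

theorem stmt_4_general (N : ℕ) (n : ℕ) (hn : 1 ≤ n) :
    (Xop N 1) ^ n * Xop N n =
      (∑ i ∈ Finset.range n,
        (n.choose i * (2 * N - 1) ^ i : ℕ) • Xop N (2 * n - 2 * i))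
      + (2 * N * (2 * N - 1) ^ (n - 1) : ℕ) • 1 := by
  obtain ⟨n, rfl⟩ := Nat.exists_eq_add_of_le' hn
  have hrec (m : ℕ) (hm : 2 ≤ m) := sphereSum_one_mul_sphereSum (k := ℂ) (α := Fin N) hm
  have hrec₁ := sphereSum_one_mul_self (k := ℂ) (α := Fin N)
  simp only [Fintype.card_fin] at hrec hrec₁
  simp only [Xop_eq_sphereSum]
  rw [pow_mul_self_of_recurrence hrec (by rw [hrec₁, sphereSum_zero]) n, sphereSum_zero,
    Nat.add_sub_cancel]
  congr 1
  refine Finset.sum_congr rfl fun i hi => ?_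
  congr 2
  have := Finset.mem_range.mp hi
  omega

theorem stmt_4 (N : ℕ) (hN : 1 ≤ N) (n : ℕ) (hn : 1 ≤ n) :
    (Xop N 1) ^ n * Xop N n =
      (∑ i ∈ Finset.range n,
        (n.choose i * (2 * N - 1) ^ i : ℕ) • Xop N (2 * n - 2 * i))
      + (2 * N * (2 * N - 1) ^ (n - 1) : ℕ) • 1 :=
  stmt_4_general N n hn
end

section
/- Let x = X_1 be the generating operator of the complex group algebra of the free group F_N on N ≥ 1 generators. If k > n ≥ 1, then x^k · X_n = x^{k−n} · ( Σ_{i=0}^{n−1} binom(n,i)·(2N−1)^i · X_{2n−2i} + 2N·(2N−1)^{n−1} · 1 ). -/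
/-!
The coefficient of `g` in `X₁ * X_m` counts the letters `a` with `|a⁻¹ g| = m`. Multiplying by a
letter shortens `g` by one when it cancels the first letter of `g` and lengthens it by one
otherwise, so `X₁ X_m = X_{m+1} + (2N-1) X_{m-1}` for `m ≥ 2`, while `X₁ X₁ = X₂ + 2N`, the
identity having no first letter. By Pascal's rule these recurrences alone give the binomial
expansions of `X₁ⁿ X_m` for `n < m` and then of `X₁ⁿ X_n`.
-/

open Finset FreeGroup MonoidAlgebra

theorem card_filter_ite_eq {α : Type*} [Fintype α] [DecidableEq α] (c : α) (p q m : ℕ) :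
    #{a | (if a = c then p else q) = m} =
      (if p = m then 1 else 0) + if q = m then Fintype.card α - 1 else 0 := by
  rw [card_filter, ← sum_erase_add _ _ (mem_univ c), if_pos rfl, add_comm,
    sum_congr rfl fun a ha => by rw [if_neg (ne_of_mem_erase ha)], sum_const,
    card_erase_of_mem (mem_univ c), card_univ, smul_eq_mul, mul_ite, mul_one, mul_zero]

theorem sum_range_succ_choose_nsmul {M : Type*} [AddCommMonoid M] (n : ℕ) (a : ℕ → M) :
    ∑ i ∈ range (n + 1), (n + 1).choose i • a i =
      ∑ i ∈ range (n + 1), n.choose i • a i + ∑ i ∈ range n, n.choose i • a (i + 1) := by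
  simp only [sum_range_succ' _ n, Nat.choose_succ_succ', add_smul, sum_add_distrib,
    Nat.choose_zero_right]
  abel

theorem sum_range_succ_succ_choose_nsmul {M : Type*} [AddCommMonoid M] (n : ℕ) (a : ℕ → M) :
    ∑ i ∈ range (n + 2), (n + 1).choose i • a i =
      ∑ i ∈ range (n + 1), n.choose i • (a i + a (i + 1)) := by
  rw [sum_range_succ, sum_range_succ_choose_nsmul, Nat.choose_self, one_smul]
  simp only [smul_add, sum_add_distrib, sum_range_succ (fun i => n.choose i • a (i + 1)),
    Nat.choose_self, one_smul, add_assoc]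

section Recurrence

variable {A : Type*} [Semiring A] {x : A} {X : ℕ → A} {q : ℕ}

theorem pow_mul_eq_sum_of_mul_eq
    (hrec : ∀ m, 2 ≤ m → x * X m = X (m + 1) + q • X (m - 1)) (n : ℕ) :
    ∀ m, n < m → x ^ n * X m = ∑ i ∈ range (n + 1), (n.choose i * q ^ i) • X (m + n - 2 * i) := by
  induction n with
  | zero => simp
  | succ n ih =>
    intro m hm
    have hidx : ∀ i, X (m - 1 + n - 2 * i) = X (m + (n + 1) - 2 * (i + 1)) := fun i => by
      congr 1; omega
    rw [pow_succ, mul_assoc, hrec m (by omega), mul_add, mul_smul_comm, ih _ (by omega),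
      ih _ (by omega)]
    simp only [mul_smul, smul_sum, sum_range_succ_succ_choose_nsmul, smul_add, sum_add_distrib, hidx]
    rw [show m + 1 + n = m + (n + 1) by omega]
    simp only [smul_comm q, pow_succ', mul_smul]

theorem pow_mul_self_eq_sum_of_mul_eq
    (hrec : ∀ m, 2 ≤ m → x * X m = X (m + 1) + q • X (m - 1)) {c : ℕ}
    (hX1 : x * X 1 = X 2 + c • 1) (n : ℕ) (hn : 1 ≤ n) :
    x ^ n * X n =
      ∑ i ∈ range n, (n.choose i * q ^ i) • X (2 * n - 2 * i) + (c * q ^ (n - 1)) • 1 := by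
  induction n, hn using Nat.le_induction with
  | base => simpa using hX1
  | succ n hn ih =>
    have hidx : ∀ i, X (n + 1 + 1 + n - 2 * i) = X (2 * (n + 1) - 2 * i) := fun i => by
      congr 1; omega
    have hidx' : ∀ i, 2 * (n + 1) - 2 * (i + 1) = 2 * n - 2 * i := fun i => by omega
    rw [pow_succ, mul_assoc, hrec (n + 1) (by omega), mul_add, mul_smul_comm, Nat.add_sub_cancel,
      ih, pow_mul_eq_sum_of_mul_eq hrec n (n + 1 + 1) (by omega)]
    simp only [mul_smul, smul_add, smul_sum, sum_range_succ_choose_nsmul, hidx, hidx', smul_comm q,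
      pow_succ']
    rw [← mul_smul (q ^ (n - 1)) q, pow_sub_one_mul (by omega), add_assoc]

end Recurrence

section FreeGroup

variable {α : Type*} [DecidableEq α]

theorem finite_setOf_length_toWord_eq [Finite α] (n : ℕ) :
    {w : FreeGroup α | w.toWord.length = n}.Finite :=
  (List.finite_length_eq (α × Bool) n).preimage toWord_injective.injOn

theorem norm_mk_singleton_inv (a : α × Bool) : (mk [a])⁻¹.norm = 1 := by
  rw [norm_inv_eq, FreeGroup.norm, toWord_mk, reduce_singleton, List.length_singleton]

theorem norm_mk_singleton_inv_mul {a b : α × Bool} {t : List (α × Bool)} {g : FreeGroup α}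
    (hg : g.toWord = b :: t) :
    ((mk [a])⁻¹ * g).norm = if a = b then t.length else t.length + 2 := by
  have hred : reduce (b :: t) = b :: t := hg ▸ reduce_toWord g
  rw [← mk_toWord (x := g), inv_mk, mul_mk, hg, FreeGroup.norm, toWord_mk]
  have hcancel : (a.1 = b.1 ∧ (!a.2) = !b.2) ↔ a = b := by simp [Prod.ext_iff]
  simp only [invRev, List.map_cons, List.map_nil, List.reverse_singleton, List.singleton_append,
    reduce.cons, hred, hcancel]
  split_ifs <;> rfl

end FreeGroup

section Xop

variable {N : ℕ}

theorem coeff_Xop (n : ℕ) (g : FreeGroup (Fin N)) :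
    (Xop N n).coeff g = if g.norm = n then 1 else 0 := by
  rw [Xop, finsum_mem_eq_finite_toFinset_sum _ (finite_setOf_length_toWord_eq n), coeff_sum]
  simp only [of_apply, coeff_single, Finsupp.finsetSum_apply, Finsupp.single_apply, sum_ite_eq',
    Set.Finite.mem_toFinset, Set.mem_ofPred_eq]
  rfl

theorem Xop_zero : Xop N 0 = 1 := by
  ext g
  simp [coeff_Xop, one_def, Finsupp.single_apply, eq_comm]

theorem Xop_one : Xop N 1 = ∑ a : Fin N × Bool, of ℂ _ (mk [a]) := by
  ext g
  have hmk : ∀ a, mk [a] = g ↔ g.toWord = [a] := fun a => by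
    rw [← toWord_injective.eq_iff, toWord_mk, reduce_singleton, eq_comm]
  rw [coeff_Xop, coeff_sum, Finsupp.finsetSum_apply]
  simp only [of_apply, coeff_single, Finsupp.single_apply, hmk]
  rcases hg : g.toWord with _ | ⟨b, _ | ⟨c, t⟩⟩ <;> simp [FreeGroup.norm, hg]

theorem coeff_Xop_one_mul (m : ℕ) (g : FreeGroup (Fin N)) :
    (Xop N 1 * Xop N m).coeff g = #{a | ((mk [a])⁻¹ * g).norm = m} := by
  rw [Xop_one, sum_mul, coeff_sum, Finsupp.finsetSum_apply, natCast_card_filter]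
  simp only [of_apply, coeff_single_mul_apply, one_mul, coeff_Xop]

theorem Xop_one_mul {m : ℕ} (hm : 1 ≤ m) :
    Xop N 1 * Xop N m =
      Xop N (m + 1) + (if m = 1 then 2 * N else 2 * N - 1) • Xop N (m - 1) := by
  ext g
  rw [coeff_Xop_one_mul, coeff_add, coeff_smul, Finsupp.add_apply, Finsupp.smul_apply, coeff_Xop,
    coeff_Xop]
  rcases hg : g.toWord with _ | ⟨b, t⟩
  · rw [toWord_eq_nil_iff.mp hg]
    simp only [mul_one, norm_mk_singleton_inv, FreeGroup.norm_one]
    rcases eq_or_lt_of_le hm with rfl | hm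
    · simp [mul_comm]
    · simp [hm.ne, hm.ne', show 0 ≠ m - 1 by omega]
  · have hgn : g.norm = t.length + 1 := by rw [FreeGroup.norm, hg, List.length_cons]
    simp only [norm_mk_singleton_inv_mul hg, card_filter_ite_eq, hgn, Fintype.card_prod,
      Fintype.card_fin, Fintype.card_bool, mul_comm N 2]
    split_ifs <;> first | omega | simp

end Xop

theorem stmt_5_general (N : ℕ) (k n : ℕ) (hn : 1 ≤ n) (hkn : n < k) :
    (Xop N 1) ^ k * Xop N n =
      (Xop N 1) ^ (k - n) *
        ((∑ i ∈ Finset.range n,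
          (n.choose i * (2 * N - 1) ^ i : ℕ) • Xop N (2 * n - 2 * i))
        + (2 * N * (2 * N - 1) ^ (n - 1) : ℕ) • 1) := by
  have hrec : ∀ m, 2 ≤ m → Xop N 1 * Xop N m = Xop N (m + 1) + (2 * N - 1) • Xop N (m - 1) :=
    fun m hm => by rw [Xop_one_mul (by omega), if_neg (by omega)]
  have hX1 : Xop N 1 * Xop N 1 = Xop N 2 + (2 * N) • 1 := by
    rw [Xop_one_mul le_rfl, if_pos rfl, Xop_zero]
  rw [← Nat.sub_add_cancel hkn.le, pow_add, mul_assoc, Nat.add_sub_cancel,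
    pow_mul_self_eq_sum_of_mul_eq hrec hX1 n hn]

theorem stmt_5 (N : ℕ) (hN : 1 ≤ N) (k n : ℕ) (hn : 1 ≤ n) (hkn : n < k) :
    (Xop N 1) ^ k * Xop N n =
      (Xop N 1) ^ (k - n) *
        ((∑ i ∈ Finset.range n,
          (n.choose i * (2 * N - 1) ^ i : ℕ) • Xop N (2 * n - 2 * i))
        + (2 * N * (2 * N - 1) ^ (n - 1) : ℕ) • 1) :=
  stmt_5_general N k n hn hkn
end
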